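/- Let σ : [0,T] → ℝ be continuous. Then the function t ↦ ‖σ‖_t² = ∫₀ᵗ ∫₀ᵗ φ(u−v) σ(u) σ(v) du dv is differentiable on (0,T) with derivative (d/dt)‖σ‖_t² = 2 σ̂_t σ(t), where σ̂_t = ∫₀ᵗ φ(t−v) σ(v) dv. -/

import Mathlib

open MeasureTheory intervalIntegral Set Filter
open scoped Topology Interval

/-! The kernel `(u, v) ↦ φ (u - v)` is symmetric, so the double integral over the square `[0, r]²`
is twice the integral over the triangle `v ≤ u`, that is `‖σ‖_r² = 2 ∫₀ʳ σ̂_u σ(u) du`. Since `φ` is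
locally integrable and `σ` continuous, `u ↦ σ̂_u` is continuous, and the fundamental theorem of
calculus gives the derivative `2 σ̂_t σ(t)`. -/

lemma locallyIntegrable_abs_rpow {α : ℝ} (hα : -1 < α) :
    LocallyIntegrable (fun x : ℝ => |x| ^ α) := by
  refine locallyIntegrable_of_norm_le_rpow (E := ℝ) (μ := volume) (C := 1) (α := -α)
    (by simp) (by simp; linarith) (ae_of_all _ fun x => ?_)
    (continuous_abs.measurable.pow_const α).aestronglyMeasurable
  simp [abs_of_nonneg (Real.rpow_nonneg (abs_nonneg x) α)]

lemma setIntegral_Ioc_indicator_Iic {a b x : ℝ} (hax : a ≤ x) (hxb : x ≤ b) (g : ℝ → ℝ) :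
    ∫ y in Ioc a b, (Iic x).indicator g y = ∫ y in a..x, g y := by
  rw [setIntegral_indicator measurableSet_Iic, Ioc_inter_Iic, min_eq_right hxb,
    integral_of_le hax]

lemma setIntegral_Ioc_indicator_Iio {a b x : ℝ} (hax : a ≤ x) (hxb : x ≤ b) (g : ℝ → ℝ) :
    ∫ y in Ioc a b, (Iio x).indicator g y = ∫ y in a..x, g y := by
  have : Ioc a b ∩ Iio x = Ioo a x := by
    ext y; simp only [mem_inter_iff, mem_Ioc, mem_Iio, mem_Ioo]; constructor
    · rintro ⟨⟨h1, -⟩, h2⟩; exact ⟨h1, h2⟩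
    · rintro ⟨h1, h2⟩; exact ⟨⟨h1, by linarith⟩, h2⟩
  rw [setIntegral_indicator measurableSet_Iio, this, integral_of_le hax,
    integral_Ioc_eq_integral_Ioo]

theorem integral_square_eq_two_mul_integral_triangle {h : ℝ → ℝ → ℝ} {a b : ℝ} (hab : a ≤ b)
    (hsymm : ∀ u v, h u v = h v u) (hh : IntegrableOn (Function.uncurry h) (Icc a b ×ˢ Icc a b)) :
    ∫ u in a..b, ∫ v in a..b, h u v = 2 * ∫ u in a..b, ∫ v in a..u, h u v := by
  set μ := volume.restrict (Ioc a b)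
  have hint : Integrable (Function.uncurry h) (μ.prod μ) := by
    rw [Measure.prod_restrict, ← Measure.volume_eq_prod]
    exact hh.mono_set (prod_mono Ioc_subset_Icc_self Ioc_subset_Icc_self)
  set L := {p : ℝ × ℝ | p.2 ≤ p.1}
  have hL : MeasurableSet L := measurableSet_le measurable_snd measurable_fst
  have hlower : ∫ u in Ioc a b, ∫ v in Ioc a b, L.indicator (Function.uncurry h) (u, v) =
      ∫ u in a..b, ∫ v in a..u, h u v := by
    rw [integral_of_le hab]
    refine setIntegral_congr_fun measurableSet_Ioc fun u hu => ?_
    rw [← setIntegral_Ioc_indicator_Iic hu.1.le hu.2]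
    rfl
  have hupper : ∫ u in Ioc a b, ∫ v in Ioc a b, Lᶜ.indicator (Function.uncurry h) (u, v) =
      ∫ u in a..b, ∫ v in a..u, h u v := by
    rw [integral_integral_swap (f := fun u v => Lᶜ.indicator (Function.uncurry h) (u, v))
      (hint.indicator hL.compl), integral_of_le hab]
    refine setIntegral_congr_fun measurableSet_Ioc fun v hv => ?_
    rw [← setIntegral_Ioc_indicator_Iio hv.1.le hv.2]
    congr 1 with u
    simp [L, indicator_apply, hsymm u v]
  calc ∫ u in a..b, ∫ v in a..b, h u v
      = ∫ u in Ioc a b, ∫ v in Ioc a b,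
          L.indicator (Function.uncurry h) (u, v) + Lᶜ.indicator (Function.uncurry h) (u, v) := by
        simp only [indicator_self_add_compl_apply, Function.uncurry_apply_pair,
          integral_of_le hab]
    _ = 2 * ∫ u in a..b, ∫ v in a..u, h u v := by
        rw [integral_integral_add (hint.indicator hL) (hint.indicator hL.compl), hlower, hupper,
          two_mul]

namespace MeasureTheory.LocallyIntegrable

variable {k f : ℝ → ℝ}

lemma intervalIntegrable (hk : LocallyIntegrable k) (a b : ℝ) :
    IntervalIntegrable k volume a b :=
  (hk.integrableOn_isCompact isCompact_uIcc).intervalIntegrable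

lemma continuous_integral_mul_comp_sub (hk : LocallyIntegrable k)
    (hf : Continuous f) : Continuous fun u => ∫ w in (0:ℝ)..u, k w * f (u - w) := by
  have hint (u a b : ℝ) : IntervalIntegrable (fun w => k w * f (u - w)) volume a b :=
    (hk.intervalIntegrable a b).mul_continuousOn (by fun_prop)
  refine continuous_iff_continuousAt.2 fun u₀ => ?_
  -- Split `∫₀ᵘ = ∫₀^u₀ + ∫_u₀^u`: dominated convergence handles the first integral, the primitive
  -- of `‖k‖` the second.
  obtain ⟨M, hM⟩ := isCompact_Icc.exists_bound_of_continuousOn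
    (hf.continuousOn (s := Icc (-(2 * |u₀| + 1)) (2 * |u₀| + 1)))
  have hnear : ∀ᶠ u in 𝓝 u₀, ∀ w ∈ [[0, u₀]] ∪ [[u₀, u]], ‖f (u - w)‖ ≤ M := by
    filter_upwards [Metric.ball_mem_nhds u₀ one_pos] with u hu w hw
    rw [Metric.mem_ball, Real.dist_eq, abs_lt] at hu
    simp only [mem_union, mem_uIcc] at hw
    refine hM _ ⟨?_, ?_⟩ <;>
      rcases hw with (⟨hw₁, hw₂⟩ | ⟨hw₁, hw₂⟩) | (⟨hw₁, hw₂⟩ | ⟨hw₁, hw₂⟩) <;>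
      linarith [le_abs_self u₀, neg_abs_le u₀]
  have hfixed : ContinuousAt (fun u => ∫ w in (0:ℝ)..u₀, k w * f (u - w)) u₀ := by
    refine continuousAt_of_dominated_interval (bound := fun w => ‖k w‖ * M)
      (.of_forall fun u => (hint u 0 u₀).def'.aestronglyMeasurable) ?_
      ((hk.intervalIntegrable 0 u₀).norm.mul_const M) (ae_of_all _ fun w _ => by fun_prop)
    filter_upwards [hnear] with u hu
    refine ae_of_all _ fun w hw => ?_
    rw [norm_mul]
    exact mul_le_mul_of_nonneg_left (hu w (Or.inl (uIoc_subset_uIcc hw))) (norm_nonneg _)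
  have hmoving : ContinuousAt (fun u => ∫ w in u₀..u, k w * f (u - w)) u₀ := by
    rw [ContinuousAt, integral_same]
    have hprim := (continuous_primitive
      (fun a b => (hk.intervalIntegrable a b).norm.mul_const M) u₀).tendsto u₀
    refine squeeze_zero_norm' ?_ (by simpa only [integral_same, abs_zero] using hprim.abs)
    filter_upwards [hnear] with u hu
    refine norm_integral_le_abs_of_norm_le (f := fun w => k w * f (u - w))
      (ae_restrict_of_forall_mem measurableSet_uIoc fun w hw => ?_)
      ((hk.intervalIntegrable u₀ u).norm.mul_const M)
    rw [norm_mul]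
    exact mul_le_mul_of_nonneg_left (hu w (Or.inr (uIoc_subset_uIcc hw))) (norm_nonneg _)
  have hsplit : (fun u => ∫ w in (0:ℝ)..u, k w * f (u - w)) =
      fun u => (∫ w in (0:ℝ)..u₀, k w * f (u - w)) + ∫ w in u₀..u, k w * f (u - w) :=
    funext fun u => (integral_add_adjacent_intervals (hint u _ _) (hint u _ _)).symm
  rw [hsplit]
  exact hfixed.add hmoving

lemma continuous_integral_comp_sub_mul (hk : LocallyIntegrable k)
    (hf : Continuous f) : Continuous fun u => ∫ v in (0:ℝ)..u, k (u - v) * f v := by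
  convert hk.continuous_integral_mul_comp_sub hf using 2 with u
  simpa using integral_comp_sub_left (a := 0) (b := u) (fun w => k w * f (u - w)) u

lemma integrableOn_comp_sub (hk : LocallyIntegrable k) (a b : ℝ) :
    IntegrableOn (fun p : ℝ × ℝ => k (p.1 - p.2)) (Icc a b ×ˢ Icc a b) := by
  have hone : Integrable ((Icc a b).indicator fun _ => (1 : ℝ)) :=
    (integrable_indicator_iff measurableSet_Icc).2 continuous_const.integrableOn_Icc
  have hker : Integrable ((Icc (a - b) (b - a)).indicator k) :=
    (integrable_indicator_iff measurableSet_Icc).2 (hk.integrableOn_isCompact isCompact_Icc)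
  -- On the square, `k (u - v)` is the convolution integrand of these two integrable functions.
  have hprod := hone.convolution_integrand (ContinuousLinearMap.lsmul ℝ ℝ) hker
  refine hprod.integrableOn.congr_fun (fun p ⟨⟨hp₁, hp₁'⟩, ⟨hp₂, hp₂'⟩⟩ => ?_)
    (measurableSet_Icc.prod measurableSet_Icc)
  have hdiff : p.1 - p.2 ∈ Icc (a - b) (b - a) := ⟨by linarith, by linarith⟩
  simp [indicator_of_mem hdiff, indicator_of_mem (show p.2 ∈ Icc a b from ⟨hp₂, hp₂'⟩)]

lemma integrableOn_comp_sub_mul_mul (hk : LocallyIntegrable k) (hf : Continuous f) (a b : ℝ) :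
    IntegrableOn (fun p : ℝ × ℝ => k (p.1 - p.2) * f p.1 * f p.2) (Icc a b ×ˢ Icc a b) := by
  simpa only [mul_assoc] using (hk.integrableOn_comp_sub a b).mul_continuousOn
    (g' := fun p : ℝ × ℝ => f p.1 * f p.2) (by fun_prop) (isCompact_Icc.prod isCompact_Icc)

theorem hasDerivAt_integral_integral_comp_sub_mul_mul (hk : LocallyIntegrable k) (hk_even : ∀ x, k (-x) = k x)
    (hf : Continuous f) {t : ℝ} (ht : 0 < t) :
    HasDerivAt (fun r => ∫ u in (0:ℝ)..r, ∫ v in (0:ℝ)..r, k (u - v) * f u * f v)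
      (2 * (∫ v in (0:ℝ)..t, k (t - v) * f v) * f t) t := by
  set S := fun u => ∫ v in (0:ℝ)..u, k (u - v) * f v
  have hS : Continuous S := hk.continuous_integral_comp_sub_mul hf
  have hFTC := ((by fun_prop : Continuous fun u => 2 * S u * f u).integral_hasStrictDerivAt
    0 t).hasDerivAt
  refine hFTC.congr_of_eventuallyEq ?_
  filter_upwards [Ioi_mem_nhds ht] with r hr
  rw [integral_square_eq_two_mul_integral_triangle (h := fun u v => k (u - v) * f u * f v) hr.le
    (fun u v => by rw [← neg_sub, hk_even]; ring) (hk.integrableOn_comp_sub_mul_mul hf 0 r),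
    ← intervalIntegral.integral_const_mul]
  refine integral_congr fun u _ => ?_
  simp only [S, ← intervalIntegral.integral_mul_const, ← intervalIntegral.integral_const_mul]
  congr 1 with v
  ring

end MeasureTheory.LocallyIntegrable

/-- Differentiability of `t ↦ ‖σ‖_t² = ∫₀ᵗ ∫₀ᵗ φ(u−v) σ(u) σ(v) du dv` on `(0,T)`,
with derivative `2 σ̂_t σ(t)`, where `σ̂_t = ∫₀ᵗ φ(t−v) σ(v) dv` and
`φ(x) = H(2H−1)|x|^{2H−2}`, `H ∈ (1/2,1)`. -/
theorem fbm_norm_sq_hasDerivAt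
    (H T : ℝ) (hH : H ∈ Set.Ioo (1/2 : ℝ) 1) (hT : 0 < T)
    (σ : ℝ → ℝ) (hσ : ContinuousOn σ (Set.Icc 0 T)) :
    ∀ t ∈ Set.Ioo (0:ℝ) T,
      HasDerivAt
        (fun r => ∫ u in (0:ℝ)..r, ∫ v in (0:ℝ)..r,
            (H * (2*H - 1) * |u - v| ^ (2*H - 2)) * σ u * σ v)
        (2 * (∫ v in (0:ℝ)..t, H * (2*H - 1) * |t - v| ^ (2*H - 2) * σ v) * σ t)
        t := by
  rintro t ⟨ht₀, htT⟩
  have hk : LocallyIntegrable fun x : ℝ => H * (2*H - 1) * |x| ^ (2*H - 2) := by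
    simpa only [Pi.smul_def, smul_eq_mul] using
      (locallyIntegrable_abs_rpow (by linarith [hH.1])).smul (H * (2*H - 1))
  set g := IccExtend hT.le ((Icc 0 T).domRestrict σ)
  have hg : Continuous g := hσ.domRestrict.Icc_extend'
  have hgσ : ∀ r ∈ Icc 0 T, EqOn g σ [[0, r]] := fun r hr x hx => by
    rw [uIcc_of_le hr.1] at hx
    exact IccExtend_of_mem _ _ ⟨hx.1, hx.2.trans hr.2⟩
  have hD := hk.hasDerivAt_integral_integral_comp_sub_mul_mul (fun x => by simp only [abs_neg]) hg ht₀
  refine (hD.congr_of_eventuallyEq ?_).congr_deriv ?_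
  · filter_upwards [Ioo_mem_nhds ht₀ htT] with r hr
    refine integral_congr fun u hu => integral_congr fun v hv => ?_
    simp only [hgσ r ⟨hr.1.le, hr.2.le⟩ hu, hgσ r ⟨hr.1.le, hr.2.le⟩ hv]
  · have hgσt := hgσ t ⟨ht₀.le, htT.le⟩
    rw [hgσt right_mem_uIcc]
    congr 2
    exact integral_congr fun v hv => by simp only [hgσt hv]
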